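/- Let 𝓧 ⊆ L¹ contain all simple random variables and let ρ: 𝓧 → [−∞, ∞] be dilatation monotone. If ρ has the Fatou property, then ρ is lower semicontinuous with respect to the relative σ(L¹, 𝓛) topology on 𝓧. -/

import Mathlib

open MeasureTheory Filter Topology

variable {Ω : Type*} [MeasurableSpace Ω]

/-- A finite measurable partition of `Ω` whose members have positive measure. -/
structure FinPartition (μ : Measure Ω) where
  parts : Finset (Set Ω)
  measSet : ∀ A ∈ parts, MeasurableSet A
  pairwiseDisj : ∀ A ∈ parts, ∀ B ∈ parts, A ≠ B → Disjoint A B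
  cover : ⋃ A ∈ parts, A = Set.univ
  pos : ∀ A ∈ parts, 0 < μ A

/-- Conditional expectation of `X` with respect to the finite partition `π`:
`E[X|π] = ∑_{A ∈ π} (∫_A X dμ / μ(A)) 1_A`. -/
noncomputable def pCondExp (μ : Measure Ω) (π : FinPartition μ) (X : Ω → ℝ) : Ω → ℝ :=
  fun ω => ∑ A ∈ π.parts, Set.indicator A (fun _ => (∫ x in A, X x ∂μ) / (μ A).toReal) ω

/-- A simple random variable. -/
def IsSimpleRV (X : Ω → ℝ) : Prop := Measurable X ∧ (Set.range X).Finite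

/-- Membership in the smallest ideal of `L¹` generated by `S`. -/
def MemIdeal (μ : Measure Ω) (S : Set (Ω → ℝ)) (X : Ω → ℝ) : Prop :=
  ∃ (n : ℕ) (Y : Fin n → Ω → ℝ) (l : Fin n → ℝ),
    (∀ i, Y i ∈ S) ∧ (∀ i, 0 ≤ l i) ∧ ∀ᵐ ω ∂μ, |X ω| ≤ ∑ i, l i * |Y i ω|

/-- Dilatation monotonicity of `ρ` on `𝓧`. -/
def DilMono (μ : Measure Ω) (𝓧 : Set (Ω → ℝ)) (ρ : (Ω → ℝ) → EReal) : Prop :=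
  ∀ X ∈ 𝓧, ∀ π : FinPartition μ, ρ (pCondExp μ π X) ≤ ρ X

/-- The Fatou property of `ρ` on `𝓧`. -/
def FatouProp (μ : Measure Ω) (𝓧 : Set (Ω → ℝ)) (ρ : (Ω → ℝ) → EReal) : Prop :=
  ∀ (Xn : ℕ → Ω → ℝ) (X : Ω → ℝ), (∀ n, Xn n ∈ 𝓧) → X ∈ 𝓧 →
    (∀ᵐ ω ∂μ, Tendsto (fun n => Xn n ω) atTop (nhds (X ω))) →
    (∃ Y, MemIdeal μ 𝓧 Y ∧ ∀ᵐ ω ∂μ, ∀ n, |Xn n ω| ≤ Y ω) →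
    ρ X ≤ liminf (fun n => ρ (Xn n)) atTop

/-- Convergence of a net in the `σ(L¹, 𝓛)` topology. -/
def TendstoWeakSimple (μ : Measure Ω) {ι : Type*} (l : Filter ι)
    (Xn : ι → Ω → ℝ) (X : Ω → ℝ) : Prop :=
  ∀ Z : Ω → ℝ, IsSimpleRV Z →
    Tendsto (fun i => ∫ ω, Xn i ω * Z ω ∂μ) l (nhds (∫ ω, X ω * Z ω ∂μ))

/-- The extension `ρ̄(X) = sup_{π ∈ Π} ρ(E[X|π])`. -/
noncomputable def rhoBar (μ : Measure Ω) (ρ : (Ω → ℝ) → EReal) (X : Ω → ℝ) : EReal :=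
  ⨆ π : FinPartition μ, ρ (pCondExp μ π X)

/-- The conjugate `ρ^#(Y) = sup_{X ∈ 𝓛} { E[XY] - ρ(X) }`. -/
noncomputable def sharp (μ : Measure Ω) (ρ : (Ω → ℝ) → EReal) (Y : Ω → ℝ) : EReal :=
  ⨆ X : {X : Ω → ℝ // IsSimpleRV X}, (((∫ ω, X.1 ω * Y ω ∂μ : ℝ) : EReal) - ρ X.1)

/-- The `σ(L¹, 𝓛)` topology on random variables: the topology induced by the maps
`X ↦ ∫ X·Z dμ`, `Z` simple. -/
noncomputable def weakSimpleTopology (μ : Measure Ω) : TopologicalSpace (Ω → ℝ) :=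
  TopologicalSpace.induced
    (fun X => fun Z : {Z : Ω → ℝ // IsSimpleRV Z} => ∫ ω, X ω * Z.1 ω ∂μ)
    Pi.topologicalSpace

/-!
Every integrable `X` is the a.e. limit of conditional expectations `E[X|πₙ]` over finite
partitions with `|E[X|πₙ]| ≤ |X| + 2`: off one exceptional cell, `πₙ` refines the level sets of
`X` at mesh `1/(n+1)`, and the exceptional cell joins a far tail of `|X|` to a unit slab
`b ≤ |X| < b + 1` (with `b ≥ n`) whose mass outweighs the integral of `|X|` over that tail.
Fatou and dilatation monotonicity then give `ρ = ρ̄ = sup_π ρ(E[·|π])` on `𝓧`. Each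
`X ↦ ρ(E[X|π])` factors through the `σ(L¹, 𝓛)`-continuous map sending `X` to its cell averages,
and on that finite-dimensional space `ρ` of the corresponding step function is lower
semicontinuous by Fatou (bounded pointwise convergence); so `ρ̄` is lower semicontinuous.
-/

open Set

variable {μ : Measure Ω}

lemma isSimpleRV_const (K : ℝ) : IsSimpleRV fun _ : Ω => K :=
  ⟨measurable_const, (finite_singleton K).subset range_const_subset⟩

lemma isSimpleRV_indicator_one {A : Set Ω} (hA : MeasurableSet A) :
    IsSimpleRV (A.indicator (1 : Ω → ℝ)) := by
  refine ⟨measurable_one.indicator hA, (toFinite {0, 1}).subset ?_⟩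
  rintro _ ⟨ω, rfl⟩
  by_cases hω : ω ∈ A <;> simp [hω]

lemma memIdeal_abs_add_const {S : Set (Ω → ℝ)} (hS : ∀ Z, IsSimpleRV Z → Z ∈ S)
    {Y : Ω → ℝ} (hY : Y ∈ S) (K : ℝ) : MemIdeal μ S fun ω => |Y ω| + K := by
  refine ⟨2, ![Y, fun _ => K], ![1, 1], ?_, ?_, ae_of_all _ fun ω => ?_⟩
  · intro i
    fin_cases i
    exacts [hY, hS _ (isSimpleRV_const K)]
  · intro i
    fin_cases i <;> norm_num
  · simpa [Fin.sum_univ_two] using abs_add_le |Y ω| K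

namespace FinPartition

lemma exists_mem (π : FinPartition μ) (ω : Ω) : ∃ A ∈ π.parts, ω ∈ A := by
  have hω : ω ∈ ⋃ A ∈ π.parts, A := π.cover ▸ mem_univ ω
  simpa using hω

noncomputable def stepFun (π : FinPartition μ) (v : π.parts → ℝ) : Ω → ℝ :=
  fun ω => ∑ A : π.parts, (A : Set Ω).indicator (fun _ => v A) ω

lemma stepFun_apply_of_mem (π : FinPartition μ) {A : Set Ω} (hA : A ∈ π.parts) {ω : Ω}
    (hω : ω ∈ A) (v : π.parts → ℝ) : π.stepFun v ω = v ⟨A, hA⟩ := by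
  rw [stepFun, Finset.sum_eq_single ⟨A, hA⟩ _ (by simp)]
  · exact indicator_of_mem hω _
  · intro B _ hBA
    refine indicator_of_notMem (fun hωB => ?_) _
    exact (π.pairwiseDisj B B.2 A hA fun h => hBA (Subtype.ext h)).le_bot ⟨hωB, hω⟩

lemma isSimpleRV_stepFun (π : FinPartition μ) (v : π.parts → ℝ) : IsSimpleRV (π.stepFun v) := by
  refine ⟨Finset.measurable_sum _ fun A _ => measurable_const.indicator (π.measSet A A.2),
    (finite_range v).subset ?_⟩
  rintro _ ⟨ω, rfl⟩
  obtain ⟨A, hA, hω⟩ := π.exists_mem ω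
  rw [π.stepFun_apply_of_mem hA hω]
  exact mem_range_self _

lemma continuous_stepFun_apply (π : FinPartition μ) (ω : Ω) :
    Continuous fun v => π.stepFun v ω := by
  obtain ⟨A, hA, hω⟩ := π.exists_mem ω
  simpa only [π.stepFun_apply_of_mem hA hω] using continuous_apply (⟨A, hA⟩ : π.parts)

lemma abs_stepFun_le (π : FinPartition μ) (v : π.parts → ℝ) (ω : Ω) : |π.stepFun v ω| ≤ ‖v‖ := by
  obtain ⟨A, hA, hω⟩ := π.exists_mem ω
  rw [π.stepFun_apply_of_mem hA hω, ← Real.norm_eq_abs]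
  exact norm_le_pi_norm v _

end FinPartition

lemma pCondExp_eq_stepFun (π : FinPartition μ) (X : Ω → ℝ) :
    pCondExp μ π X = π.stepFun fun A => ⨍ x in (A : Set Ω), X x ∂μ := by
  funext ω
  simp only [pCondExp, FinPartition.stepFun, setAverage_eq, measureReal_def, smul_eq_mul,
    inv_mul_eq_div]
  exact (Finset.sum_coe_sort π.parts _).symm

lemma pCondExp_apply_of_mem {π : FinPartition μ} {A : Set Ω} (hA : A ∈ π.parts) {ω : Ω}
    (hω : ω ∈ A) (X : Ω → ℝ) : pCondExp μ π X ω = ⨍ x in A, X x ∂μ := by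
  rw [pCondExp_eq_stepFun, π.stepFun_apply_of_mem hA hω]

lemma isSimpleRV_pCondExp (π : FinPartition μ) (X : Ω → ℝ) : IsSimpleRV (pCondExp μ π X) := by
  rw [pCondExp_eq_stepFun]
  exact π.isSimpleRV_stepFun _

lemma pCondExp_congr_ae (π : FinPartition μ) {X Y : Ω → ℝ} (h : X =ᵐ[μ] Y) :
    pCondExp μ π X = pCondExp μ π Y := by
  simp only [pCondExp_eq_stepFun, average_congr (ae_restrict_of_ae h)]
lemma exists_ae_eq_measure_fiber_pos [NeZero μ] {α : Type*} [MeasurableSpace α]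
    [MeasurableSingletonClass α] {f : Ω → α} (hf : Measurable f) (hfin : (range f).Finite) :
    ∃ g : Ω → α, Measurable g ∧ (range g).Finite ∧ g =ᵐ[μ] f ∧ ∀ ω, 0 < μ (g ⁻¹' {g ω}) := by
  classical
  set G := {a | 0 < μ (f ⁻¹' {a})}
  have hG : ∀ᵐ ω ∂μ, f ω ∈ G := by
    refine measure_mono_null (t := ⋃ a ∈ range f \ G, f ⁻¹' {a})
      (fun ω hω => mem_biUnion (⟨⟨ω, rfl⟩, hω⟩ : f ω ∈ range f \ G) rfl)
      ((measure_biUnion_null_iff (hfin.subset sdiff_subset).countable).2 fun a ha => ?_)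
    simpa [G, pos_iff_ne_zero] using ha.2
  obtain ⟨ω₀, hω₀⟩ := hG.exists
  have hGmeas : MeasurableSet {ω | f ω ∈ G} := by
    rw [← preimage_ofPred_eq, ← preimage_inter_range]
    exact hf (hfin.subset inter_subset_right).measurableSet
  refine ⟨fun ω => if f ω ∈ G then f ω else f ω₀, Measurable.ite hGmeas hf measurable_const,
    hfin.subset ?_, hG.mono fun ω hω => if_pos hω, fun ω => ?_⟩
  · rintro _ ⟨ω, rfl⟩
    dsimp only
    split_ifs <;> exact mem_range_self _
  · have hgG : (if f ω ∈ G then f ω else f ω₀) ∈ G := by split_ifs <;> assumption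
    refine hgG.trans_le (measure_mono fun x (hx : f x = _) => ?_)
    change (if f x ∈ G then f x else f ω₀) = _
    rw [if_pos (hx ▸ hgG), hx]

lemma exists_finPartition_of_measure_fiber_pos {α : Type*} [MeasurableSpace α]
    [MeasurableSingletonClass α] {g : Ω → α} (hg : Measurable g) (hfin : (range g).Finite)
    (hpos : ∀ ω, 0 < μ (g ⁻¹' {g ω})) :
    ∃ π : FinPartition μ, ∀ X ω, pCondExp μ π X ω = ⨍ x in g ⁻¹' {g ω}, X x ∂μ := by
  classical
  have hmem : ∀ ω, g ⁻¹' {g ω} ∈ hfin.toFinset.image fun a => g ⁻¹' {a} := fun ω =>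
    Finset.mem_image_of_mem _ (hfin.mem_toFinset.2 (mem_range_self ω))
  let π : FinPartition μ :=
    { parts := hfin.toFinset.image fun a => g ⁻¹' {a}
      measSet := by
        simp only [Finset.mem_image, forall_exists_index, and_imp, forall_apply_eq_imp_iff₂]
        exact fun a _ => hg (measurableSet_singleton a)
      pairwiseDisj := by
        simp only [Finset.mem_image, forall_exists_index, and_imp, forall_apply_eq_imp_iff₂]
        intro a _ b _ hab
        exact (disjoint_singleton.2 fun h => hab (by rw [h])).preimage g
      cover := eq_univ_of_forall fun ω => mem_iUnion₂.2 ⟨_, hmem ω, rfl⟩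
      pos := by
        simp only [Finset.mem_image, Finite.mem_toFinset, forall_exists_index, and_imp]
        rintro _ _ ⟨ω, rfl⟩ rfl
        exact hpos ω }
  exact ⟨π, fun X ω => pCondExp_apply_of_mem (hmem ω) (show ω ∈ g ⁻¹' {g ω} from rfl) X⟩

lemma exists_finPartition_pCondExp_ae_eq [NeZero μ] {α : Type*} [MeasurableSpace α]
    [MeasurableSingletonClass α] {f : Ω → α} (hf : Measurable f) (hfin : (range f).Finite) :
    ∃ π : FinPartition μ, ∀ X, ∀ᵐ ω ∂μ,
      0 < μ (f ⁻¹' {f ω}) ∧ pCondExp μ π X ω = ⨍ x in f ⁻¹' {f ω}, X x ∂μ := by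
  obtain ⟨g, hg, hgfin, hgf, hpos⟩ := exists_ae_eq_measure_fiber_pos (μ := μ) hf hfin
  obtain ⟨π, hπ⟩ := exists_finPartition_of_measure_fiber_pos hg hgfin hpos
  have hfiber : ∀ a, g ⁻¹' {a} =ᵐ[μ] f ⁻¹' {a} := fun a =>
    hgf.mono fun ω h => congrArg (· ∈ ({a} : Set α)) h
  refine ⟨π, fun X => hgf.mono fun ω h => ?_⟩
  rw [hπ, h, Measure.restrict_congr_set (hfiber _), ← measure_congr (hfiber _), ← h]
  exact ⟨hpos ω, rfl⟩

section Approximation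

variable {T : Ω → ℝ}

lemma tendsto_setIntegral_abs_ge (hTm : Measurable T) (hTi : Integrable T μ) :
    Tendsto (fun m : ℕ => ∫ x in {x | (m : ℝ) ≤ |T x|}, |T x| ∂μ) atTop (𝓝 0) := by
  have hempty : ⋂ m : ℕ, {x | (m : ℝ) ≤ |T x|} = ∅ :=
    eq_empty_of_forall_notMem fun x hx =>
      (exists_nat_gt |T x|).elim fun m hm => (mem_iInter.1 hx m).not_gt hm
  simpa [hempty] using tendsto_setIntegral_of_antitone (μ := μ) (f := fun x => |T x|)
    (fun m => measurableSet_le measurable_const hTm.abs)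
    (fun _ _ hmn => ofPred_subset_ofPred.2 fun _ hx => (Nat.cast_le.2 hmn).trans hx)
    ⟨0, hTi.abs.integrableOn⟩

lemma floor_div_mem_Ioo {y M δ : ℝ} (hδ : 0 < δ) (hy : |y| ≤ M) :
    ⌊y / δ⌋ ∈ Ioo (-(⌈M / δ⌉ + 1)) (⌈M / δ⌉ + 1) := by
  have hyδ : |y / δ| ≤ M / δ := by
    rw [abs_div, abs_of_pos hδ]
    exact div_le_div_of_nonneg_right hy hδ.le
  have h₁ := Int.floor_le (y / δ)
  have h₂ := Int.sub_one_lt_floor (y / δ)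
  have h₃ := Int.le_ceil (M / δ)
  have h₄ := abs_le.1 hyδ
  constructor
  · have : ((-(⌈M / δ⌉ + 1) : ℤ) : ℝ) < ⌊y / δ⌋ := by push_cast; linarith
    exact_mod_cast this
  · have : (⌊y / δ⌋ : ℝ) < ((⌈M / δ⌉ + 1 : ℤ) : ℝ) := by push_cast; linarith
    exact_mod_cast this

lemma mem_Icc_of_floor_div_eq {y δ : ℝ} {k : ℤ} (hδ : 0 < δ) (h : ⌊y / δ⌋ = k) :
    y ∈ Icc (k * δ) (k * δ + δ) := by
  rw [Int.floor_eq_iff] at h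
  constructor
  · linarith [(le_div_iff₀ hδ).1 h.1]
  · linarith [(div_lt_iff₀ hδ).1 h.2]

variable [IsFiniteMeasure μ]

lemma exists_finPartition_pCondExp_approx [NeZero μ] (hTm : Measurable T) (hTi : Integrable T μ)
    {R : Set Ω} (hR : MeasurableSet R) {M δ C : ℝ} (hδ : 0 < δ) (hM : ∀ ω ∉ R, |T ω| ≤ M)
    (hC : |∫ x in R, T x ∂μ| ≤ C * μ.real R) :
    ∃ π : FinPartition μ, ∀ᵐ ω ∂μ,
      (ω ∉ R → |pCondExp μ π T ω - T ω| ≤ δ) ∧ (ω ∈ R → |pCondExp μ π T ω| ≤ C) := by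
  classical
  -- `top` labels the cell `R`; it exceeds every label `⌊T / δ⌋` used off `R`.
  set top : ℤ := ⌈M / δ⌉ + 1
  have hbound : ∀ ω ∉ R, ⌊T ω / δ⌋ ∈ Ioo (-top) top := fun ω hω =>
    floor_div_mem_Ioo hδ (hM ω hω)
  let f : Ω → ℤ := fun ω => if ω ∈ R then top else ⌊T ω / δ⌋
  have hf : Measurable f := Measurable.ite hR measurable_const (hTm.div_const δ).floor
  have hfin : (range f).Finite := by
    refine ((finite_Ioo (-top) top).insert top).subset ?_
    rintro _ ⟨ω, rfl⟩
    by_cases hω : ω ∈ R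
    · simp [f, hω]
    · simp only [f, hω, if_false]
      exact mem_insert_of_mem _ (hbound ω hω)
  obtain ⟨π, hπ⟩ := exists_finPartition_pCondExp_ae_eq (μ := μ) hf hfin
  refine ⟨π, (hπ T).mono fun ω ⟨hpos, hE⟩ => ⟨fun hω => ?_, fun hω => ?_⟩⟩
  · have hcell : ∀ x ∈ f ⁻¹' {f ω}, T x ∈ Icc (⌊T ω / δ⌋ * δ) (⌊T ω / δ⌋ * δ + δ) := by
      intro x (hx : f x = f ω)
      have hxR : x ∉ R := fun hxR => by
        simp only [f, hxR, hω, if_true, if_false] at hx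
        exact (hbound ω hω).2.ne hx.symm
      simp only [f, hxR, hω, if_false] at hx
      exact mem_Icc_of_floor_div_eq hδ hx
    have havg := Convex.set_average_mem (convex_Icc _ _) isClosed_Icc hpos.ne' (measure_ne_top _ _)
      (ae_restrict_of_forall_mem (hf (measurableSet_singleton _)) hcell) hTi.integrableOn
    rw [hE, ← Real.dist_eq]
    linarith [Real.dist_le_of_mem_Icc havg (hcell ω rfl)]
  · have hfiber : f ⁻¹' {f ω} = R := by
      ext x
      by_cases hx : x ∈ R
      · simp [f, hx, hω]
      · simp only [f, hx, hω, mem_preimage, mem_singleton_iff, if_true, if_false, iff_false]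
        exact (hbound x hx).2.ne
    rw [hfiber] at hpos hE
    have hRpos : 0 < μ.real R := ENNReal.toReal_pos hpos.ne' (measure_ne_top _ _)
    rw [hE, setAverage_eq, smul_eq_mul, abs_mul, abs_inv, abs_of_pos hRpos, inv_mul_le_iff₀ hRpos]
    linarith

lemma exists_setIntegral_tail_le_slab (hTm : Measurable T) (hTi : Integrable T μ) (b₀ : ℝ) :
    ∃ b ≥ b₀, ∃ M ≥ b + 1,
      ∫ x in {x | M ≤ |T x|}, |T x| ∂μ ≤ μ.real {x | b ≤ |T x| ∧ |T x| < b + 1} := by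
  by_cases h : ∃ k : ℕ, 0 < μ.real {x | b₀ + k ≤ |T x| ∧ |T x| < b₀ + k + 1}
  · obtain ⟨k, hk⟩ := h
    obtain ⟨m, hm⟩ := ((tendsto_setIntegral_abs_ge hTm hTi).eventually (gt_mem_nhds hk)).exists
    refine ⟨b₀ + k, by simp, max (b₀ + k + 1) m, le_max_left _ _, le_trans ?_ hm.le⟩
    exact setIntegral_mono_set hTi.abs.integrableOn (ae_of_all _ fun x => abs_nonneg _)
      (Eventually.of_forall fun x (hx : _ ≤ _) => (le_max_right _ _).trans hx)
  · push Not at h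
    refine ⟨b₀, le_rfl, b₀ + 1, le_rfl, ?_⟩
    have hnull : μ {x | b₀ ≤ |T x|} = 0 := by
      refine measure_mono_null (t := ⋃ k : ℕ, {x | b₀ + k ≤ |T x| ∧ |T x| < b₀ + k + 1})
        (fun x (hx : b₀ ≤ |T x|) => mem_iUnion.2 ⟨⌊|T x| - b₀⌋₊, ?_, ?_⟩)
        (measure_iUnion_null fun k =>
          (measureReal_eq_zero_iff (measure_ne_top _ _)).1 ((h k).antisymm measureReal_nonneg))
      · linarith [Nat.floor_le (sub_nonneg.2 hx)]
      · linarith [Nat.lt_floor_add_one (|T x| - b₀)]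
    rw [setIntegral_measure_zero _ (measure_mono_null
      (ofPred_subset_ofPred.2 fun x (hx : b₀ + 1 ≤ |T x|) => by linarith) hnull)]
    exact measureReal_nonneg

lemma abs_setIntegral_tail_union_slab_le (hTm : Measurable T) (hTi : Integrable T μ) {b M : ℝ}
    (hb : 0 ≤ b) (hbM : b + 1 ≤ M)
    (htail : ∫ x in {x | M ≤ |T x|}, |T x| ∂μ ≤ μ.real {x | b ≤ |T x| ∧ |T x| < b + 1}) :
    |∫ x in {x | M ≤ |T x|} ∪ {x | b ≤ |T x| ∧ |T x| < b + 1}, T x ∂μ| ≤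
      (b + 2) * μ.real ({x | M ≤ |T x|} ∪ {x | b ≤ |T x| ∧ |T x| < b + 1}) := by
  set tail := {x | M ≤ |T x|}
  set slab := {x | b ≤ |T x| ∧ |T x| < b + 1}
  have hslab : MeasurableSet slab :=
    (measurableSet_le measurable_const hTm.abs).inter (measurableSet_lt hTm.abs measurable_const)
  have hdisj : Disjoint tail slab :=
    disjoint_left.2 fun x (h₁ : M ≤ |T x|) h₂ => by linarith [h₂.2]
  have hslab_le : ∫ x in slab, |T x| ∂μ ≤ (b + 1) * μ.real slab := by
    simpa [mul_comm] using setIntegral_mono_on hTi.abs.integrableOn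
      (integrable_const (b + 1)).integrableOn hslab fun x hx => hx.2.le
  calc |∫ x in tail ∪ slab, T x ∂μ| ≤ ∫ x in tail ∪ slab, |T x| ∂μ := abs_integral_le_integral_abs
    _ = ∫ x in tail, |T x| ∂μ + ∫ x in slab, |T x| ∂μ :=
        setIntegral_union hdisj hslab hTi.abs.integrableOn hTi.abs.integrableOn
    _ ≤ (b + 2) * μ.real slab := by linarith
    _ ≤ (b + 2) * μ.real (tail ∪ slab) :=
        mul_le_mul_of_nonneg_left (measureReal_mono subset_union_right) (by linarith)

lemma exists_finPartition_pCondExp_near [NeZero μ] (hTm : Measurable T) (hTi : Integrable T μ)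
    (n : ℕ) : ∃ π : FinPartition μ, ∀ᵐ ω ∂μ, |pCondExp μ π T ω| ≤ |T ω| + 2 ∧
      (|T ω| < n → |pCondExp μ π T ω - T ω| ≤ 1 / (n + 1)) := by
  obtain ⟨b, hnb, M, hbM, htail⟩ := exists_setIntegral_tail_le_slab hTm hTi (n : ℝ)
  have hb : 0 ≤ b := (Nat.cast_nonneg n).trans hnb
  -- Averaging `T` over the exceptional cell costs at most `b + 2`, while `|T| ≥ b` there.
  set R := {x | M ≤ |T x|} ∪ {x | b ≤ |T x| ∧ |T x| < b + 1}
  have hR : MeasurableSet R := (measurableSet_le measurable_const hTm.abs).union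
    ((measurableSet_le measurable_const hTm.abs).inter (measurableSet_lt hTm.abs measurable_const))
  have hRb : ∀ ω ∈ R, b ≤ |T ω| := by
    rintro ω (h | h)
    exacts [by linarith [show M ≤ |T ω| from h], h.1]
  obtain ⟨π, hπ⟩ := exists_finPartition_pCondExp_approx hTm hTi hR (M := M) (δ := 1 / (n + 1))
    (by positivity) (fun ω hω => (not_le.1 fun h => hω (Or.inl h)).le)
    (abs_setIntegral_tail_union_slab_le hTm hTi hb hbM htail)
  refine ⟨π, hπ.mono fun ω ⟨hout, hin⟩ => ?_⟩
  by_cases hω : ω ∈ R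
  · have hbω := hRb ω hω
    exact ⟨(hin hω).trans (by linarith), fun hn => absurd hnb (by linarith)⟩
  · have hδ : 1 / ((n : ℝ) + 1) ≤ 1 := div_le_one_of_le₀ (by linarith) (by positivity)
    have hd := hout hω
    exact ⟨by linarith [abs_sub_abs_le_abs_sub (pCondExp μ π T ω) (T ω)], fun _ => hd⟩

theorem exists_seq_pCondExp_tendsto [NeZero μ] {X : Ω → ℝ} (hX : Integrable X μ) :
    ∃ π : ℕ → FinPartition μ,
      (∀ᵐ ω ∂μ, Tendsto (fun n => pCondExp μ (π n) X ω) atTop (𝓝 (X ω))) ∧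
      ∀ᵐ ω ∂μ, ∀ n, |pCondExp μ (π n) X ω| ≤ |X ω| + 2 := by
  set T := hX.1.mk X
  have hXT : X =ᵐ[μ] T := hX.1.ae_eq_mk
  choose π hπ using exists_finPartition_pCondExp_near hX.1.stronglyMeasurable_mk.measurable
    (hX.congr hXT)
  simp only [pCondExp_congr_ae _ hXT]
  refine ⟨π, ?_, ?_⟩
  · filter_upwards [ae_all_iff.2 hπ, hXT] with ω hω hωX
    rw [hωX, ← tendsto_sub_nhds_zero_iff]
    refine squeeze_zero_norm' ?_ tendsto_one_div_add_atTop_nhds_zero_nat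
    obtain ⟨N, hN⟩ := exists_nat_gt |T ω|
    filter_upwards [eventually_ge_atTop N] with n hn
    exact (hω n).2 (hN.trans_le (Nat.cast_le.2 hn))
  · filter_upwards [ae_all_iff.2 hπ, hXT] with ω hω hωX n
    rw [hωX]
    exact (hω n).1

end Approximation

lemma continuous_integral_mul_weakSimple {Z : Ω → ℝ} (hZ : IsSimpleRV Z) :
    @Continuous _ _ (weakSimpleTopology μ) _ fun X : Ω → ℝ => ∫ ω, X ω * Z ω ∂μ := by
  let := weakSimpleTopology μ
  exact (continuous_apply (⟨Z, hZ⟩ : {Z : Ω → ℝ // IsSimpleRV Z})).comp (continuous_induced_dom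
    (f := fun (X : Ω → ℝ) (Z : {Z : Ω → ℝ // IsSimpleRV Z}) => ∫ ω, X ω * Z.1 ω ∂μ))

lemma continuous_setIntegral_weakSimple {A : Set Ω} (hA : MeasurableSet A) :
    @Continuous _ _ (weakSimpleTopology μ) _ fun X : Ω → ℝ => ∫ x in A, X x ∂μ := by
  have hindicator :
      (fun X : Ω → ℝ => ∫ x in A, X x ∂μ) = fun X => ∫ x, X x * A.indicator 1 x ∂μ := by
    funext X
    rw [← integral_indicator hA]
    congr 1 with x
    by_cases hx : x ∈ A <;> simp [hx]
  rw [hindicator]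
  exact continuous_integral_mul_weakSimple (isSimpleRV_indicator_one hA)

lemma continuous_setAverage_parts (π : FinPartition μ) :
    @Continuous _ _ (weakSimpleTopology μ) _
      fun X (A : π.parts) => ⨍ x in (A : Set Ω), X x ∂μ := by
  let := weakSimpleTopology μ
  refine continuous_pi fun A => ?_
  simp_rw [setAverage_eq]
  exact (continuous_setIntegral_weakSimple (π.measSet A A.2)).const_smul ((μ.real A)⁻¹)

section Fatou

variable {𝓧 : Set (Ω → ℝ)} {ρ : (Ω → ℝ) → EReal}

lemma FatouProp.le_of_tendsto (hFatou : FatouProp μ 𝓧 ρ) (h𝓛 : ∀ Z, IsSimpleRV Z → Z ∈ 𝓧)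
    {Xn : ℕ → Ω → ℝ} {X : Ω → ℝ} (hXn : ∀ n, Xn n ∈ 𝓧) (hX : X ∈ 𝓧)
    (hconv : ∀ᵐ ω ∂μ, Tendsto (fun n => Xn n ω) atTop (𝓝 (X ω))) {K : ℝ}
    (hdom : ∀ᵐ ω ∂μ, ∀ n, |Xn n ω| ≤ |X ω| + K) {c : EReal} (hc : ∀ n, ρ (Xn n) ≤ c) :
    ρ X ≤ c :=
  (hFatou Xn X hXn hX hconv ⟨_, memIdeal_abs_add_const h𝓛 hX K, hdom⟩).trans
    (liminf_le_of_frequently_le' (Frequently.of_forall hc))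

lemma lowerSemicontinuous_rho_stepFun (hFatou : FatouProp μ 𝓧 ρ)
    (h𝓛 : ∀ Z, IsSimpleRV Z → Z ∈ 𝓧) (π : FinPartition μ) :
    LowerSemicontinuous fun v => ρ (π.stepFun v) := by
  refine lowerSemicontinuous_iff_isClosed_preimage.2 fun c =>
    IsSeqClosed.isClosed fun v w hv hvw => ?_
  obtain ⟨K, hK⟩ := hvw.norm.bddAbove_range
  exact hFatou.le_of_tendsto h𝓛 (fun k => h𝓛 _ (π.isSimpleRV_stepFun _))
    (h𝓛 _ (π.isSimpleRV_stepFun _))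
    (ae_of_all _ fun ω => ((π.continuous_stepFun_apply ω).tendsto w).comp hvw)
    (ae_of_all _ fun ω k => (π.abs_stepFun_le _ ω).trans
      ((hK ⟨k, rfl⟩).trans (le_add_of_nonneg_left (abs_nonneg _)))) hv

lemma lowerSemicontinuous_rho_pCondExp (hFatou : FatouProp μ 𝓧 ρ)
    (h𝓛 : ∀ Z, IsSimpleRV Z → Z ∈ 𝓧) (π : FinPartition μ) :
    @LowerSemicontinuous _ _ (weakSimpleTopology μ) _ fun X => ρ (pCondExp μ π X) := by
  let := weakSimpleTopology μ
  simp_rw [pCondExp_eq_stepFun]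
  exact (lowerSemicontinuous_rho_stepFun hFatou h𝓛 π).comp (continuous_setAverage_parts π)

lemma lowerSemicontinuous_rhoBar (hFatou : FatouProp μ 𝓧 ρ) (h𝓛 : ∀ Z, IsSimpleRV Z → Z ∈ 𝓧) :
    @LowerSemicontinuous _ _ (weakSimpleTopology μ) _ (rhoBar μ ρ) := by
  let := weakSimpleTopology μ
  exact lowerSemicontinuous_iSup fun π => lowerSemicontinuous_rho_pCondExp hFatou h𝓛 π

lemma rhoBar_eq_of_mem [IsFiniteMeasure μ] [NeZero μ] (hdil : DilMono μ 𝓧 ρ)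
    (hFatou : FatouProp μ 𝓧 ρ) (h𝓛 : ∀ Z, IsSimpleRV Z → Z ∈ 𝓧) {X : Ω → ℝ} (hX : X ∈ 𝓧)
    (hXi : Integrable X μ) :
    rhoBar μ ρ X = ρ X := by
  refine le_antisymm (iSup_le (hdil X hX)) ?_
  obtain ⟨π, hconv, hdom⟩ := exists_seq_pCondExp_tendsto hXi
  exact hFatou.le_of_tendsto h𝓛 (fun n => h𝓛 _ (isSimpleRV_pCondExp _ _)) hX hconv hdom
    fun n => le_iSup (fun π => ρ (pCondExp μ π X)) (π n)

end Fatou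

theorem stmt3_general (μ : Measure Ω) [IsProbabilityMeasure μ]
    (𝓧 : Set (Ω → ℝ)) (h𝓧L1 : ∀ X ∈ 𝓧, Integrable X μ)
    (h𝓛 : ∀ Z : Ω → ℝ, IsSimpleRV Z → Z ∈ 𝓧)
    (ρ : (Ω → ℝ) → EReal)
    (hdil : DilMono μ 𝓧 ρ) (hFatou : FatouProp μ 𝓧 ρ) :
    ∀ c : ℝ,
      @IsClosed {X // X ∈ 𝓧}
        (TopologicalSpace.induced Subtype.val (weakSimpleTopology μ))
        {x : {X // X ∈ 𝓧} | ρ x.1 ≤ (c : EReal)} := by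
  intro c
  let := weakSimpleTopology μ
  have hsublevel : {x : {X // X ∈ 𝓧} | ρ x.1 ≤ (c : EReal)} =
      Subtype.val ⁻¹' (rhoBar μ ρ ⁻¹' Iic (c : EReal)) := by
    ext x
    simp [rhoBar_eq_of_mem hdil hFatou h𝓛 x.2 (h𝓧L1 x.1 x.2)]
  rw [hsublevel]
  exact ((lowerSemicontinuous_rhoBar hFatou h𝓛).isClosed_preimage _).preimage continuous_induced_dom

/-- If `ρ` on `𝓧 ⊇ 𝓛` is dilatation monotone with the Fatou property, then
`ρ` is lower semicontinuous for the relative `σ(L¹, 𝓛)` topology on `𝓧`: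
all sublevel sets are closed in the subspace topology. -/
theorem stmt3 (μ : Measure Ω) [IsProbabilityMeasure μ] [NullSingletonClass μ]
    (𝓧 : Set (Ω → ℝ)) (h𝓧L1 : ∀ X ∈ 𝓧, Integrable X μ)
    (h𝓛 : ∀ Z : Ω → ℝ, IsSimpleRV Z → Z ∈ 𝓧)
    (ρ : (Ω → ℝ) → EReal)
    (hdil : DilMono μ 𝓧 ρ) (hFatou : FatouProp μ 𝓧 ρ) :
    ∀ c : ℝ,
      @IsClosed {X // X ∈ 𝓧}
        (TopologicalSpace.induced Subtype.val (weakSimpleTopology μ))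
        {x : {X // X ∈ 𝓧} | ρ x.1 ≤ (c : EReal)} :=
  stmt3_general μ 𝓧 h𝓧L1 h𝓛 ρ hdil hFatou
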